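/- Let W and B be N×N Hermitian positive semidefinite complex matrices, ĥ ∈ ℂᴺ, and let ρ ≥ 0, δ ∈ ℝ, γ > 0, C ∈ ℝ. Then the 2×2 real symmetric matrix [[ρ, δ], [δ, (ĥ+e)ᴴ W (ĥ+e)/γ + C]] is positive semidefinite for every e ∈ ℂᴺ with eᴴ B e ≤ 1, if and only if there exists ν ≥ 0 such that the (N+2)×(N+2) Hermitian block matrix [[ρ, δ, 0], [δ, ĥᴴWĥ/γ + C − ν, ĥᴴW/γ], [0, Wĥ/γ, W/γ + νB]] is positive semidefinite. -/

import Mathlib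

/-!
By the 2×2 criterion `[[ρ, δ], [δ, m]] ⪰ 0 ↔ 0 ≤ ρ ∧ 0 ≤ m ∧ δ² ≤ ρ m`, the robust condition says
that the convex function `f e = Re ((ĥ + e)ᴴ W (ĥ + e)) / γ + C` stays above `δ² / ρ` on the
ellipsoid `eᴴ B e ≤ 1` (when `ρ = 0` the condition forces `δ = 0`, and Lean's `δ² / 0 = 0` is
the right threshold). As `e = 0` is a Slater point, Lagrange duality for a single convex
constraint gives `ν ≥ 0` with `f e - δ² / ρ + ν (eᴴ B e - 1) ≥ 0` for all `e`. Conversely, at a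
test vector `(a, t, t u)` the quadratic form of the LMI is the form of `[[ρ, δ], [δ, f u]]` at
`(a, t)` plus `ν |t|² (uᴴ B u - 1)`, which yields both directions.
-/

open Matrix ComplexOrder

section LagrangeMultiplier

variable {E : Type*} [AddCommGroup E] [Module ℝ E] {s : Set E} {F G : E → ℝ}

-- The convex combination of `x` and `w` with weights `-G w : G x` lies in `{G ≤ 0}`.
lemma neg_mul_add_mul_nonneg_of_convexOn (hF : ConvexOn ℝ s F) (hG : ConvexOn ℝ s G)
    (hFG : ∀ x ∈ s, G x ≤ 0 → 0 ≤ F x) {x w : E} (hx : x ∈ s) (hw : w ∈ s)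
    (hGx : 0 < G x) (hGw : G w < 0) : 0 ≤ -G w * F x + G x * F w := by
  set a := -G w / (G x - G w)
  set b := G x / (G x - G w)
  have hd : 0 < G x - G w := by linarith
  have ha : 0 ≤ a := div_nonneg (by linarith) hd.le
  have hb : 0 ≤ b := div_nonneg hGx.le hd.le
  have hab : a + b = 1 := by simp only [a, b]; field_simp; ring
  have hmem : a • x + b • w ∈ s := hF.1 hx hw ha hb hab
  have hGm : G (a • x + b • w) ≤ 0 := by
    calc G (a • x + b • w) ≤ a * G x + b * G w := hG.2 hx hw ha hb hab
      _ = 0 := by simp only [a, b]; field_simp; ring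
  have hFm : F (a • x + b • w) ≤ a * F x + b * F w := hF.2 hx hw ha hb hab
  have h := (hFG _ hmem hGm).trans hFm
  have : a * F x + b * F w = (-G w * F x + G x * F w) / (G x - G w) := by
    simp only [a, b]; field_simp
  rw [this] at h
  rwa [le_div_iff₀ hd, zero_mul] at h

-- The multiplier is `⨅ F w / -G w` over the strictly feasible points `w`.
theorem exists_lagrange_multiplier_of_convexOn (hF : ConvexOn ℝ s F) (hG : ConvexOn ℝ s G)
    (hslater : ∃ x₀ ∈ s, G x₀ < 0) (hFG : ∀ x ∈ s, G x ≤ 0 → 0 ≤ F x) :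
    ∃ ν : ℝ, 0 ≤ ν ∧ ∀ x ∈ s, 0 ≤ F x + ν * G x := by
  set T := (fun w => F w / -G w) '' {w ∈ s | G w < 0}
  obtain ⟨x₀, hx₀, hGx₀⟩ := hslater
  have hT : T.Nonempty := ⟨_, Set.mem_image_of_mem _ ⟨hx₀, hGx₀⟩⟩
  have hT0 : ∀ r ∈ T, 0 ≤ r := Set.forall_mem_image.mpr fun w ⟨hw, hGw⟩ =>
    div_nonneg (hFG w hw hGw.le) (neg_nonneg.mpr hGw.le)
  refine ⟨sInf T, le_csInf hT hT0, fun x hx => ?_⟩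
  rcases lt_trichotomy (G x) 0 with hGx | hGx | hGx
  · have : sInf T ≤ F x / -G x := csInf_le ⟨0, hT0⟩ (Set.mem_image_of_mem _ ⟨hx, hGx⟩)
    rw [le_div_iff₀ (neg_pos.mpr hGx)] at this
    linarith
  · simpa [hGx] using hFG x hx hGx.le
  · have : -F x / G x ≤ sInf T := le_csInf hT <| Set.forall_mem_image.mpr fun w ⟨hw, hGw⟩ => by
      rw [div_le_div_iff₀ hGx (neg_pos.mpr hGw)]
      nlinarith [neg_mul_add_mul_nonneg_of_convexOn hF hG hFG hx hw hGx hGw]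
    rw [div_le_iff₀ hGx] at this
    linarith

end LagrangeMultiplier

section QuadraticForm

variable {𝕜 n : Type*} [RCLike 𝕜] [Fintype n]

lemma star_smul_dotProduct_mulVec_smul (M : Matrix n n 𝕜) (t : 𝕜) (u : n → 𝕜) :
    star (t • u) ⬝ᵥ M *ᵥ (t • u) = star t * t * (star u ⬝ᵥ M *ᵥ u) := by
  simp only [star_smul, mulVec_smul, smul_dotProduct, dotProduct_smul, smul_eq_mul]
  ring

lemma Matrix.PosSemidef.convexOn_re_dotProduct_mulVec {M : Matrix n n 𝕜} (hM : M.PosSemidef) :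
    ConvexOn ℝ Set.univ fun x : n → 𝕜 => RCLike.re (star x ⬝ᵥ M *ᵥ x) := by
  refine ⟨convex_univ, fun x _ y _ a b ha hb hab => ?_⟩
  have hab' : (a : 𝕜) + b = 1 := by exact_mod_cast hab
  -- the convexity defect is `a b` times the form at `x - y`
  have key : star ((a : 𝕜) • x + (b : 𝕜) • y) ⬝ᵥ M *ᵥ ((a : 𝕜) • x + (b : 𝕜) • y)
      + (a * b : 𝕜) * (star (x - y) ⬝ᵥ M *ᵥ (x - y))
      = a * (star x ⬝ᵥ M *ᵥ x) + b * (star y ⬝ᵥ M *ᵥ y) := by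
    simp only [star_add, star_sub, star_smul, RCLike.star_def, RCLike.conj_ofReal, mulVec_add,
      mulVec_sub, mulVec_smul, add_dotProduct, sub_dotProduct, dotProduct_add, dotProduct_sub,
      smul_dotProduct, dotProduct_smul, smul_eq_mul]
    linear_combination (a * (star x ⬝ᵥ M *ᵥ x) + b * (star y ⬝ᵥ M *ᵥ y) : 𝕜) * hab'
  have hxy := hM.re_dotProduct_nonneg (x - y)
  have hre := congrArg RCLike.re key
  simp only [map_add, RCLike.re_ofReal_mul, ← RCLike.ofReal_mul] at hre
  simp only [RCLike.real_smul_eq_coe_smul (K := 𝕜), smul_eq_mul]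
  nlinarith [mul_nonneg (mul_nonneg ha hb) hxy]

end QuadraticForm

section FinTwo

variable {ρ δ m : ℝ}

lemma dotProduct_fin_two_mulVec (z : Fin 2 → ℝ) :
    z ⬝ᵥ !![ρ, δ; δ, m] *ᵥ z = ρ * z 0 ^ 2 + 2 * δ * z 0 * z 1 + m * z 1 ^ 2 := by
  simp only [dotProduct, mulVec, Fin.sum_univ_two, of_apply, cons_val', cons_val_zero,
    cons_val_one, empty_val', cons_val_fin_one]
  ring

lemma isHermitian_fin_two : (!![ρ, δ; δ, m]).IsHermitian := by
  ext i j; fin_cases i <;> fin_cases j <;> rfl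

lemma posSemidef_fin_two_iff : (!![ρ, δ; δ, m]).PosSemidef ↔ 0 ≤ ρ ∧ 0 ≤ m ∧ δ ^ 2 ≤ ρ * m := by
  refine ⟨fun h => ⟨h.diag_nonneg (i := 0), h.diag_nonneg (i := 1), ?_⟩, fun ⟨hρ, hm, hδ⟩ => ?_⟩
  · simpa [det_fin_two_of, sq] using h.det_nonneg
  refine .of_dotProduct_mulVec_nonneg isHermitian_fin_two fun z => ?_
  rw [star_trivial, dotProduct_fin_two_mulVec]
  rcases hρ.eq_or_lt with rfl | hρ
  · have : δ = 0 := by nlinarith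
    subst this
    nlinarith
  · -- `ρ · (quadratic form) = (ρ z₀ + δ z₁)² + (ρ m - δ²) z₁²`
    nlinarith [sq_nonneg (ρ * z 0 + δ * z 1), mul_nonneg (sub_nonneg.mpr hδ) (sq_nonneg (z 1))]

lemma posSemidef_fin_two_iff_div_le (hρ : 0 ≤ ρ) (hδ : ρ = 0 → δ = 0) :
    (!![ρ, δ; δ, m]).PosSemidef ↔ δ ^ 2 / ρ ≤ m := by
  rw [posSemidef_fin_two_iff]
  rcases hρ.eq_or_lt with rfl | hρ
  · simp [hδ rfl]
  · rw [div_le_iff₀' hρ]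
    exact ⟨fun h => h.2.2, fun h => ⟨hρ.le, by nlinarith [sq_nonneg δ], h⟩⟩

end FinTwo

lemma re_star_dotProduct_map_ofReal_mulVec {n : Type*} [Fintype n] (A : Matrix n n ℝ)
    (w : n → ℂ) :
    (star w ⬝ᵥ A.map (↑) *ᵥ w).re =
      (fun i => (w i).re) ⬝ᵥ A *ᵥ (fun i => (w i).re)
        + (fun i => (w i).im) ⬝ᵥ A *ᵥ (fun i => (w i).im) := by
  simp only [dotProduct, mulVec, Complex.re_sum, Finset.mul_sum, ← Finset.sum_add_distrib]
  refine Finset.sum_congr rfl fun i _ => Finset.sum_congr rfl fun j _ => ?_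
  simp [Complex.mul_re, Complex.mul_im]

lemma Matrix.PosSemidef.re_star_dotProduct_map_ofReal_mulVec_nonneg {n : Type*} [Fintype n]
    {A : Matrix n n ℝ} (hA : A.PosSemidef) (w : n → ℂ) : 0 ≤ (star w ⬝ᵥ A.map (↑) *ᵥ w).re := by
  rw [re_star_dotProduct_map_ofReal_mulVec]
  simpa only [star_trivial] using
    add_nonneg (hA.dotProduct_mulVec_nonneg _) (hA.dotProduct_mulVec_nonneg _)

lemma re_star_dotProduct_fin_two_map_ofReal_mulVec (ρ δ m : ℝ) (w : Fin 2 → ℂ) :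
    (star w ⬝ᵥ (!![ρ, δ; δ, m]).map (↑) *ᵥ w).re =
      ρ * Complex.normSq (w 0) + 2 * δ * (star (w 0) * w 1).re + m * Complex.normSq (w 1) := by
  rw [re_star_dotProduct_map_ofReal_mulVec, dotProduct_fin_two_mulVec,
    dotProduct_fin_two_mulVec]
  simp only [Complex.normSq_apply, Complex.mul_re, Complex.star_def, Complex.conj_re,
    Complex.conj_im]
  ring

lemma star_sumElim_dotProduct_fromBlocks_mulVec {m n α : Type*} [Fintype m] [Fintype n]
    [CommSemiring α] [StarRing α] (A : Matrix m m α) (B : Matrix m n α) (C : Matrix n m α)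
    (D : Matrix n n α) (w : m → α) (v : n → α) :
    star (w ⊕ᵥ v) ⬝ᵥ fromBlocks A B C D *ᵥ (w ⊕ᵥ v) =
      star w ⬝ᵥ A *ᵥ w + star w ⬝ᵥ B *ᵥ v + star v ⬝ᵥ C *ᵥ w + star v ⬝ᵥ D *ᵥ v := by
  simp only [fromBlocks_mulVec, Function.star_sumElim, sumElim_dotProduct_sumElim, dotProduct_add,
    Sum.elim_comp_inl, Sum.elim_comp_inr]
  ring

noncomputable def sinrLMI {N : ℕ} (W B : Matrix (Fin N) (Fin N) ℂ) (hh : Fin N → ℂ)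
    (ρ δ γ C ν : ℝ) : Matrix (Fin 2 ⊕ Fin N) (Fin 2 ⊕ Fin N) ℂ :=
  fromBlocks
    !![(ρ : ℂ), (δ : ℂ); (δ : ℂ), (star hh ⬝ᵥ W *ᵥ hh) / (γ : ℂ) + (C : ℂ) - (ν : ℂ)]
    (of fun p j => if p = (0 : Fin 2) then 0 else (star hh ᵥ* W) j / (γ : ℂ))
    (of fun j p => if p = (0 : Fin 2) then 0 else (W *ᵥ hh) j / (γ : ℂ))
    ((γ : ℂ)⁻¹ • W + (ν : ℂ) • B)

section SinrLMI

variable {N : ℕ} {W B : Matrix (Fin N) (Fin N) ℂ} {hh : Fin N → ℂ} {ρ δ γ C ν : ℝ}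

lemma isHermitian_sinrLMI (hW : W.IsHermitian) (hB : B.IsHermitian) :
    (sinrLMI W B hh ρ δ γ C ν).IsHermitian := by
  have hq : star (star hh ⬝ᵥ W *ᵥ hh) = star hh ⬝ᵥ W *ᵥ hh :=
    Complex.conj_eq_iff_im.mpr (hW.im_star_dotProduct_mulVec_self hh)
  have hr (j : Fin N) : star ((star hh ᵥ* W) j) = (W *ᵥ hh) j := by
    rw [← Pi.star_apply, star_vecMul, star_star, hW.eq]
  refine .fromBlocks ?_ ?_ ?_
  · ext i j
    fin_cases i <;> fin_cases j <;> simp [hq]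
  · ext j p
    fin_cases p <;> simp [← hr]
  · simp [IsHermitian, conjTranspose_add, conjTranspose_smul, hW.eq, hB.eq]

lemma star_dotProduct_sinrLMI_mulVec (w : Fin 2 → ℂ) (v : Fin N → ℂ) :
    star (w ⊕ᵥ v) ⬝ᵥ sinrLMI W B hh ρ δ γ C ν *ᵥ (w ⊕ᵥ v) =
      star w ⬝ᵥ (!![ρ, δ; δ, C - ν]).map (↑) *ᵥ w
        + (star (w 1 • hh + v) ⬝ᵥ W *ᵥ (w 1 • hh + v)) / γ + ν * (star v ⬝ᵥ B *ᵥ v) := by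
  have hA : star w ⬝ᵥ !![(ρ : ℂ), δ; δ, (star hh ⬝ᵥ W *ᵥ hh) / γ + C - ν] *ᵥ w =
      star w ⬝ᵥ (!![ρ, δ; δ, C - ν]).map (↑) *ᵥ w
        + star (w 1) * w 1 * (star hh ⬝ᵥ W *ᵥ hh) / γ := by
    simp only [dotProduct, mulVec, Fin.sum_univ_two, Pi.star_apply, of_apply, cons_val',
      cons_val_zero, cons_val_one, cons_val_fin_one, map_apply, Complex.ofReal_sub]
    ring
  have hB : star w ⬝ᵥ (of fun p j => if p = (0 : Fin 2) then 0 else (star hh ᵥ* W) j / γ) *ᵥ v =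
      star (w 1) * (star hh ⬝ᵥ W *ᵥ v) / γ := by
    have : star w ᵥ* (of fun p j => if p = (0 : Fin 2) then 0 else (star hh ᵥ* W) j / γ) =
        (star (w 1) / γ) • (star hh ᵥ* W) := by
      ext j
      simp only [vecMul, dotProduct, Fin.sum_univ_two, Pi.star_apply, of_apply, mul_ite, mul_zero,
        ↓reduceIte, one_ne_zero, zero_add, Pi.smul_apply, smul_eq_mul]
      ring
    rw [dotProduct_mulVec, this, smul_dotProduct, ← dotProduct_mulVec, smul_eq_mul]
    ring
  have hC : star v ⬝ᵥ (of fun j p => if p = (0 : Fin 2) then 0 else (W *ᵥ hh) j / γ) *ᵥ w =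
      w 1 * (star v ⬝ᵥ W *ᵥ hh) / γ := by
    have : (of fun j p => if p = (0 : Fin 2) then 0 else (W *ᵥ hh) j / γ) *ᵥ w =
        (w 1 / γ) • (W *ᵥ hh) := by
      ext j
      simp only [mulVec, dotProduct, Fin.sum_univ_two, of_apply, ite_mul, zero_mul, ↓reduceIte,
        one_ne_zero, zero_add, Pi.smul_apply, smul_eq_mul]
      ring
    rw [this, dotProduct_smul, smul_eq_mul]
    ring
  have hD : star v ⬝ᵥ ((γ : ℂ)⁻¹ • W + (ν : ℂ) • B) *ᵥ v =
      (star v ⬝ᵥ W *ᵥ v) / γ + ν * (star v ⬝ᵥ B *ᵥ v) := by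
    simp [add_mulVec, smul_mulVec, dotProduct_add, div_eq_inv_mul]
  have hW : star (w 1 • hh + v) ⬝ᵥ W *ᵥ (w 1 • hh + v) =
      star (w 1) * w 1 * (star hh ⬝ᵥ W *ᵥ hh) + star (w 1) * (star hh ⬝ᵥ W *ᵥ v)
        + w 1 * (star v ⬝ᵥ W *ᵥ hh) + star v ⬝ᵥ W *ᵥ v := by
    simp only [star_add, star_smul, mulVec_add, mulVec_smul, dotProduct_add, add_dotProduct,
      dotProduct_smul, smul_dotProduct, smul_eq_mul]
    ring
  rw [sinrLMI, star_sumElim_dotProduct_fromBlocks_mulVec, hA, hB, hC, hD, hW]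
  ring

lemma re_star_dotProduct_sinrLMI_mulVec_smul (w : Fin 2 → ℂ) (u : Fin N → ℂ) :
    (star (w ⊕ᵥ w 1 • u) ⬝ᵥ sinrLMI W B hh ρ δ γ C ν *ᵥ (w ⊕ᵥ w 1 • u)).re =
      (star w ⬝ᵥ (!![ρ, δ; δ, (star (hh + u) ⬝ᵥ W *ᵥ (hh + u)).re / γ + C]).map (↑) *ᵥ w).re
        + ν * Complex.normSq (w 1) * ((star u ⬝ᵥ B *ᵥ u).re - 1) := by
  rw [star_dotProduct_sinrLMI_mulVec, ← smul_add, star_smul_dotProduct_mulVec_smul,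
    star_smul_dotProduct_mulVec_smul, Complex.star_def, ← Complex.normSq_eq_conj_mul_self]
  simp only [Complex.add_re, Complex.div_ofReal_re, Complex.re_ofReal_mul,
    re_star_dotProduct_fin_two_map_ofReal_mulVec]
  ring

lemma posSemidef_sinrLMI_of_forall_le (hW : W.PosSemidef) (hB : B.PosSemidef) (hγ : 0 < γ)
    (hν : 0 ≤ ν) {c : ℝ} (hc : (!![ρ, δ; δ, c]).PosSemidef)
    (hcν : ∀ u, c ≤ (star (hh + u) ⬝ᵥ W *ᵥ (hh + u)).re / γ + C
      + ν * ((star u ⬝ᵥ B *ᵥ u).re - 1)) :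
    (sinrLMI W B hh ρ δ γ C ν).PosSemidef := by
  have hM : (sinrLMI W B hh ρ δ γ C ν).IsHermitian := isHermitian_sinrLMI hW.1 hB.1
  refine .of_dotProduct_mulVec_nonneg hM fun x => ?_
  refine Complex.nonneg_iff.mpr ⟨?_, (hM.im_star_dotProduct_mulVec_self x).symm⟩
  obtain ⟨w, v, rfl⟩ : ∃ w v, x = w ⊕ᵥ v := ⟨_, _, (Sum.elim_comp_inl_inr x).symm⟩
  have hPc := hc.re_star_dotProduct_map_ofReal_mulVec_nonneg w
  rw [re_star_dotProduct_fin_two_map_ofReal_mulVec] at hPc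
  by_cases ht : w 1 = 0
  · rw [star_dotProduct_sinrLMI_mulVec, ht, zero_smul, zero_add]
    simp only [Complex.add_re, Complex.div_ofReal_re, Complex.re_ofReal_mul,
      re_star_dotProduct_fin_two_map_ofReal_mulVec, ht, map_zero, mul_zero, Complex.zero_re,
      add_zero] at hPc ⊢
    exact add_nonneg (add_nonneg hPc (div_nonneg (hW.re_dotProduct_nonneg v) hγ.le))
      (mul_nonneg hν (hB.re_dotProduct_nonneg v))
  · obtain ⟨u, rfl⟩ : ∃ u, v = w 1 • u := ⟨(w 1)⁻¹ • v, (smul_inv_smul₀ ht v).symm⟩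
    rw [re_star_dotProduct_sinrLMI_mulVec_smul, re_star_dotProduct_fin_two_map_ofReal_mulVec]
    nlinarith [mul_le_mul_of_nonneg_left (hcν u) (Complex.normSq_nonneg (w 1))]

lemma exists_posSemidef_sinrLMI (hW : W.PosSemidef) (hB : B.PosSemidef) (hγ : 0 < γ)
    (H : ∀ e : Fin N → ℂ, (star e ⬝ᵥ B *ᵥ e).re ≤ 1 →
      (!![ρ, δ; δ, (star (hh + e) ⬝ᵥ W *ᵥ (hh + e)).re / γ + C]).PosSemidef) :
    ∃ ν, 0 ≤ ν ∧ (sinrLMI W B hh ρ δ γ C ν).PosSemidef := by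
  obtain ⟨hρ, -, hδρ⟩ := posSemidef_fin_two_iff.mp (H 0 (by simp))
  have hδ : ρ = 0 → δ = 0 := fun h => by rw [h, zero_mul] at hδρ; nlinarith [sq_nonneg δ]
  have hP := fun m => posSemidef_fin_two_iff_div_le (m := m) hρ hδ
  have hF : ConvexOn ℝ Set.univ
      fun u => (star (hh + u) ⬝ᵥ W *ᵥ (hh + u)).re / γ + C - δ ^ 2 / ρ := by
    refine (((hW.convexOn_re_dotProduct_mulVec.translate_right hh).smul
      (inv_nonneg.mpr hγ.le)).add_const (C - δ ^ 2 / ρ)).congr fun u _ => ?_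
    simp [div_eq_inv_mul, add_sub_assoc]
  have hG : ConvexOn ℝ Set.univ fun u : Fin N → ℂ => (star u ⬝ᵥ B *ᵥ u).re - 1 :=
    (hB.convexOn_re_dotProduct_mulVec.add_const (-1)).congr fun u _ => by simp [sub_eq_add_neg]
  obtain ⟨ν, hν, hνFG⟩ := exists_lagrange_multiplier_of_convexOn hF hG ⟨0, trivial, by simp⟩
    fun u _ hu => sub_nonneg.mpr ((hP _).mp (H u (sub_nonpos.mp hu)))
  refine ⟨ν, hν, posSemidef_sinrLMI_of_forall_le hW hB hγ hν ((hP _).mpr le_rfl) fun u => ?_⟩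
  linarith [hνFG u trivial]

lemma posSemidef_of_posSemidef_sinrLMI (hν : 0 ≤ ν)
    (hM : (sinrLMI W B hh ρ δ γ C ν).PosSemidef) {e : Fin N → ℂ} (he : (star e ⬝ᵥ B *ᵥ e).re ≤ 1) :
    (!![ρ, δ; δ, (star (hh + e) ⬝ᵥ W *ᵥ (hh + e)).re / γ + C]).PosSemidef := by
  refine .of_dotProduct_mulVec_nonneg isHermitian_fin_two fun z => ?_
  set w : Fin 2 → ℂ := fun i => z i
  have h := hM.re_dotProduct_nonneg (w ⊕ᵥ w 1 • e)
  rw [RCLike.re_to_complex, re_star_dotProduct_sinrLMI_mulVec_smul,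
    re_star_dotProduct_map_ofReal_mulVec] at h
  simp only [w, Complex.ofReal_re, Complex.ofReal_im, Complex.normSq_ofReal, ← Pi.zero_def,
    zero_dotProduct, add_zero] at h
  rw [star_trivial]
  nlinarith [mul_nonneg (mul_nonneg hν (mul_self_nonneg (z 1))) (sub_nonneg.mpr he)]

end SinrLMI

theorem robust_schur_sinr_iff_LMI_general {N : ℕ}
    (W B : Matrix (Fin N) (Fin N) ℂ) (hW : W.PosSemidef) (hB : B.PosSemidef)
    (hh : Fin N → ℂ) (ρ δ γ C : ℝ) (hγ : 0 < γ) :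
    (∀ e : Fin N → ℂ, (star e ⬝ᵥ B *ᵥ e).re ≤ 1 →
        (!![ρ, δ; δ, (star (hh + e) ⬝ᵥ W *ᵥ (hh + e)).re / γ + C] :
          Matrix (Fin 2) (Fin 2) ℝ).PosSemidef) ↔
      (∃ ν : ℝ, 0 ≤ ν ∧
        (Matrix.fromBlocks
            (!![(ρ : ℂ), (δ : ℂ);
                (δ : ℂ), (star hh ⬝ᵥ W *ᵥ hh) / (γ : ℂ) + (C : ℂ) - (ν : ℂ)] :
              Matrix (Fin 2) (Fin 2) ℂ)
            (Matrix.of fun p j => if p = (0 : Fin 2) then 0 else (star hh ᵥ* W) j / (γ : ℂ))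
            (Matrix.of fun j p => if p = (0 : Fin 2) then 0 else (W *ᵥ hh) j / (γ : ℂ))
            ((γ : ℂ)⁻¹ • W + (ν : ℂ) • B)).PosSemidef) := by
  refine ⟨exists_posSemidef_sinrLMI hW hB hγ, ?_⟩
  rintro ⟨ν, hν, hM⟩ e he
  exact posSemidef_of_posSemidef_sinrLMI hν hM he

/-- The robust 2×2 PSD condition over an ellipsoidal uncertainty set is equivalent to a
single (N+2)×(N+2) LMI with one multiplier `ν` (SINR-side reformulation). -/
theorem robust_schur_sinr_iff_LMI {N : ℕ}
    (W B : Matrix (Fin N) (Fin N) ℂ) (hW : W.PosSemidef) (hB : B.PosSemidef)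
    (hh : Fin N → ℂ) (ρ δ γ C : ℝ) (hρ : 0 ≤ ρ) (hγ : 0 < γ) :
    (∀ e : Fin N → ℂ, (star e ⬝ᵥ B *ᵥ e).re ≤ 1 →
        (!![ρ, δ; δ, (star (hh + e) ⬝ᵥ W *ᵥ (hh + e)).re / γ + C] :
          Matrix (Fin 2) (Fin 2) ℝ).PosSemidef) ↔
      (∃ ν : ℝ, 0 ≤ ν ∧
        (Matrix.fromBlocks
            (!![(ρ : ℂ), (δ : ℂ);
                (δ : ℂ), (star hh ⬝ᵥ W *ᵥ hh) / (γ : ℂ) + (C : ℂ) - (ν : ℂ)] :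
              Matrix (Fin 2) (Fin 2) ℂ)
            (Matrix.of fun p j => if p = (0 : Fin 2) then 0 else (star hh ᵥ* W) j / (γ : ℂ))
            (Matrix.of fun j p => if p = (0 : Fin 2) then 0 else (W *ᵥ hh) j / (γ : ℂ))
            ((γ : ℂ)⁻¹ • W + (ν : ℂ) • B)).PosSemidef) :=
  robust_schur_sinr_iff_LMI_general W B hW hB hh ρ δ γ C hγ
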